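/- arXiv:2207.00711 — 3 statements merged into one kernel-verified Lean document; each statement's English description precedes it below -/
import Mathlib

section
/- Let 0 < ν < 1, 0 < α₀ ≤ η, and let L, N : [α₀, η] → ℝ be continuous with 0 < L_m ≤ L(s) ≤ L_M and 0 < N_m ≤ N(s) ≤ N_M for all s. Define Φ(η) = ∫_{α₀}^{η} s^{-ν} L(s)^{-1} exp(-2∫_{α₀}^{s} t (N(t)/L(t)) dt) ds. Then Φ(η) ≤ (1/(2 L_m)) exp((N_m/L_M) α₀²) (N_m/L_M)^{(ν-1)/2} [γ((1-ν)/2, η² N_m/L_M) - γ((1-ν)/2, α₀² N_m/L_M)], where γ is the lower incomplete gamma function. -/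
/-- Lower incomplete gamma function `γ(s, x) = ∫₀ˣ t^{s-1} e^{-t} dt`. -/
noncomputable def lowerGamma (p x : ℝ) : ℝ := ∫ t in (0:ℝ)..x, t ^ (p - 1) * Real.exp (-t)

theorem Phi1_upper_bound (ν α₀ η Lm LM Nm NM : ℝ) (L N : ℝ → ℝ)
    (hν : 0 < ν) (hν1 : ν < 1) (hα : 0 < α₀) (hη : α₀ ≤ η)
    (hL : ContinuousOn L (Set.Icc α₀ η)) (hN : ContinuousOn N (Set.Icc α₀ η))
    (hLm : 0 < Lm) (hNm : 0 < Nm)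
    (hLb : ∀ s ∈ Set.Icc α₀ η, Lm ≤ L s ∧ L s ≤ LM)
    (hNb : ∀ s ∈ Set.Icc α₀ η, Nm ≤ N s ∧ N s ≤ NM) :
    (∫ s in α₀..η, s ^ (-ν) * (L s)⁻¹ *
        Real.exp (-2 * ∫ t in α₀..s, t * (N t / L t))) ≤
      (1 / (2 * Lm)) * Real.exp ((Nm / LM) * α₀ ^ 2) * (Nm / LM) ^ ((ν - 1) / 2) *
        (lowerGamma ((1 - ν) / 2) (η ^ 2 * (Nm / LM)) -
          lowerGamma ((1 - ν) / 2) (α₀ ^ 2 * (Nm / LM))) := by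
  have hα₀mem : α₀ ∈ Set.Icc α₀ η := ⟨le_refl _, hη⟩
  have hLM : 0 < LM := lt_of_lt_of_le hLm ((hLb α₀ hα₀mem).1.trans (hLb α₀ hα₀mem).2)
  set c : ℝ := Nm / LM with hc_def
  have hc : 0 < c := div_pos hNm hLM
  set p : ℝ := (1 - ν) / 2 with hp_def
  have hp : 0 < p := by unfold p; linarith
  have hpos : ∀ s ∈ Set.Icc α₀ η, 0 < s := fun s hs => lt_of_lt_of_le hα hs.1
  have hLpos : ∀ s ∈ Set.Icc α₀ η, 0 < L s := fun s hs => lt_of_lt_of_le hLm (hLb s hs).1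
  have hLne : ∀ s ∈ Set.Icc α₀ η, L s ≠ 0 := fun s hs => (hLpos s hs).ne'
  have huIcc : Set.uIcc α₀ η = Set.Icc α₀ η := Set.uIcc_of_le hη
  -- continuity of t ↦ t * (N t / L t)
  have hcont0 : ContinuousOn (fun t => t * (N t / L t)) (Set.Icc α₀ η) :=
    continuousOn_id.mul (hN.div hL hLne)
  have hint0 : MeasureTheory.IntegrableOn (fun t => t * (N t / L t)) (Set.uIcc α₀ η) := by
    rw [huIcc]; exact hcont0.integrableOn_Icc
  -- continuity of the primitive
  have hcontI : ContinuousOn (fun s => ∫ t in α₀..s, t * (N t / L t)) (Set.Icc α₀ η) := by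
    rw [← huIcc]
    exact intervalIntegral.continuousOn_primitive_interval hint0
  -- continuity of the integrand F
  have hrpow : ContinuousOn (fun s : ℝ => s ^ (-ν)) (Set.Icc α₀ η) :=
    ContinuousOn.rpow_const continuousOn_id (fun s hs => Or.inl (hpos s hs).ne')
  have hcontF : ContinuousOn (fun s => s ^ (-ν) * (L s)⁻¹ *
      Real.exp (-2 * ∫ t in α₀..s, t * (N t / L t))) (Set.Icc α₀ η) :=
    (hrpow.mul (hL.inv₀ hLne)).mul
      (Real.continuous_exp.comp_continuousOn (continuousOn_const.mul hcontI))
  -- the bounding function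
  set B : ℝ → ℝ := fun s => s ^ (-ν) * Lm⁻¹ *
      (Real.exp (c * α₀ ^ 2) * Real.exp (-(s ^ 2 * c))) with hB_def
  have hcontB : ContinuousOn B (Set.Icc α₀ η) :=
    (hrpow.mul continuousOn_const).mul
      (continuousOn_const.mul
        (Real.continuous_exp.comp_continuousOn ((continuousOn_pow 2).mul continuousOn_const).neg))
  -- pointwise bound F s ≤ B s
  have hFB : ∀ s ∈ Set.Icc α₀ η, s ^ (-ν) * (L s)⁻¹ *
      Real.exp (-2 * ∫ t in α₀..s, t * (N t / L t)) ≤ B s := by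
    intro s hs
    have hs0 : 0 < s := hpos s hs
    have hsub : Set.Icc α₀ s ⊆ Set.Icc α₀ η := Set.Icc_subset_Icc le_rfl hs.2
    -- lower bound on the inner integral
    have hint1 : IntervalIntegrable (fun t : ℝ => t * c) MeasureTheory.volume α₀ s :=
      (continuous_id.mul continuous_const).intervalIntegrable _ _
    have hint2 : IntervalIntegrable (fun t => t * (N t / L t)) MeasureTheory.volume α₀ s :=
      (hcont0.mono hsub).intervalIntegrable_of_Icc hs.1
    have hImono : (∫ t in α₀..s, t * c) ≤ ∫ t in α₀..s, t * (N t / L t) := by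
      apply intervalIntegral.integral_mono_on hs.1 hint1 hint2
      intro t ht
      have ht' := hsub ht
      have ht0 : 0 < t := hpos t ht'
      have : c ≤ N t / L t :=
        div_le_div₀ (le_trans hNm.le (hNb t ht').1) (hNb t ht').1 (hLpos t ht') (hLb t ht').2
      exact mul_le_mul_of_nonneg_left this ht0.le
    have hIval : (∫ t in α₀..s, t * c) = (s ^ 2 - α₀ ^ 2) / 2 * c := by
      rw [intervalIntegral.integral_mul_const, integral_id]
    have hIlb : (s ^ 2 - α₀ ^ 2) / 2 * c ≤ ∫ t in α₀..s, t * (N t / L t) := by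
      rw [← hIval]; exact hImono
    have hexp : Real.exp (-2 * ∫ t in α₀..s, t * (N t / L t)) ≤
        Real.exp (c * α₀ ^ 2) * Real.exp (-(s ^ 2 * c)) := by
      rw [← Real.exp_add]
      apply Real.exp_le_exp.2
      nlinarith [hIlb]
    have h1 : (0:ℝ) ≤ s ^ (-ν) := (Real.rpow_pos_of_pos hs0 _).le
    have h2 : (L s)⁻¹ ≤ Lm⁻¹ := inv_anti₀ hLm (hLb s hs).1
    calc s ^ (-ν) * (L s)⁻¹ * Real.exp (-2 * ∫ t in α₀..s, t * (N t / L t))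
        ≤ s ^ (-ν) * Lm⁻¹ * (Real.exp (c * α₀ ^ 2) * Real.exp (-(s ^ 2 * c))) := by
          apply mul_le_mul
          · exact mul_le_mul_of_nonneg_left h2 h1
          · exact hexp
          · exact (Real.exp_pos _).le
          · positivity
      _ = B s := rfl
  -- integral comparison
  have hmono : (∫ s in α₀..η, s ^ (-ν) * (L s)⁻¹ *
      Real.exp (-2 * ∫ t in α₀..s, t * (N t / L t))) ≤ ∫ s in α₀..η, B s :=
    intervalIntegral.integral_mono_on hη (hcontF.intervalIntegrable_of_Icc hη)
      (hcontB.intervalIntegrable_of_Icc hη) hFB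
  refine le_trans hmono (le_of_eq ?_)
  -- now compute ∫ B = RHS
  -- substitution u = s^2 * c
  have hderiv : ∀ x ∈ Set.uIcc α₀ η, HasDerivAt (fun x : ℝ => x ^ 2 * c) (2 * x * c) x := by
    intro x _
    have := (hasDerivAt_pow 2 x).mul_const c
    simpa [mul_comm, mul_assoc] using this
  have hcontd : ContinuousOn (fun x : ℝ => 2 * x * c) (Set.uIcc α₀ η) :=
    ((continuous_const.mul continuous_id).mul continuous_const).continuousOn
  have himg : ((fun x : ℝ => x ^ 2 * c) '' Set.uIcc α₀ η) ⊆ {t : ℝ | 0 < t} := by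
    rintro _ ⟨x, hx, rfl⟩
    rw [huIcc] at hx
    have := hpos x hx
    simp only [Set.mem_setOf_eq]
    positivity
  have hcontg : ContinuousOn (fun t : ℝ => t ^ (p - 1) * Real.exp (-t))
      ((fun x : ℝ => x ^ 2 * c) '' Set.uIcc α₀ η) := by
    apply ContinuousOn.mono _ himg
    exact (ContinuousOn.rpow_const continuousOn_id fun t ht => Or.inl (ne_of_gt ht)).mul
      (Real.continuous_exp.comp continuous_neg).continuousOn
  have hsubst : (∫ x in α₀..η, (2 * x * c) • ((fun t : ℝ => t ^ (p - 1) * Real.exp (-t)) ∘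
      (fun x : ℝ => x ^ 2 * c)) x) = ∫ t in (α₀ ^ 2 * c)..(η ^ 2 * c), t ^ (p - 1) * Real.exp (-t) :=
    intervalIntegral.integral_comp_smul_deriv' hderiv hcontd hcontg
  -- gamma difference equals interval integral
  have hgint : ∀ x : ℝ, IntervalIntegrable (fun t : ℝ => t ^ (p - 1) * Real.exp (-t))
      MeasureTheory.volume 0 x := by
    intro x
    have h1 : IntervalIntegrable (fun t : ℝ => t ^ (p - 1)) MeasureTheory.volume 0 x :=
      intervalIntegral.intervalIntegrable_rpow' (by unfold p; linarith)
    exact h1.mul_continuousOn (Real.continuous_exp.comp continuous_neg).continuousOn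
  have hgamma : lowerGamma p (η ^ 2 * c) - lowerGamma p (α₀ ^ 2 * c) =
      ∫ t in (α₀ ^ 2 * c)..(η ^ 2 * c), t ^ (p - 1) * Real.exp (-t) := by
    unfold lowerGamma
    exact intervalIntegral.integral_interval_sub_left (hgint _) (hgint _)
  rw [hgamma, ← hsubst, ← intervalIntegral.integral_const_mul]
  apply intervalIntegral.integral_congr
  intro x hx
  rw [huIcc] at hx
  have hx0 : 0 < x := hpos x hx
  simp only [Function.comp, smul_eq_mul, hB_def]
  have e1 : (x ^ 2 * c) ^ (p - 1) = x ^ (2 * (p - 1)) * c ^ (p - 1) := by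
    rw [Real.mul_rpow (by positivity) hc.le, ← Real.rpow_natCast x 2,
      ← Real.rpow_mul hx0.le]
    norm_num
  have ex : x ^ (2 * (p - 1)) = x ^ (-ν) / x := by
    rw [show 2 * (p - 1) = -ν - 1 by unfold p; ring, Real.rpow_sub hx0, Real.rpow_one]
  have ec : c ^ (p - 1) = c⁻¹ / c ^ ((ν - 1) / 2) := by
    rw [show p - 1 = -1 - (ν - 1) / 2 by unfold p; ring, Real.rpow_sub hc,
      Real.rpow_neg_one]
  rw [e1, ex, ec]
  have hcν : c ^ ((ν - 1) / 2) ≠ 0 := (Real.rpow_pos_of_pos hc _).ne'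
  field_simp
end

section
/- Let 0 < ν < 1, 0 < α₀ ≤ η, and let L, N : [α₀, η] → ℝ be continuous with 0 < L_m ≤ L(s) ≤ L_M and 0 < N_m ≤ N(s) ≤ N_M. Define Φ(η) = ∫_{α₀}^{η} s^{-ν} L(s)^{-1} exp(-2∫_{α₀}^{s} t (N(t)/L(t)) dt) ds. Then Φ(η) ≥ (1/(2 L_M)) e^{(N_M/L_m)α₀²} (N_M/L_m)^{(ν-1)/2} [γ((1-ν)/2, η² N_M/L_m) - γ((1-ν)/2, α₀² N_M/L_m)]. -/
open MeasureTheory intervalIntegral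


lemma lowerGamma_diff {p : ℝ} (hp : 0 < p) {a b : ℝ} (ha : 0 < a) (hab : a ≤ b) :
    lowerGamma p b - lowerGamma p a = ∫ t in a..b, t ^ (p - 1) * Real.exp (-t) := by
  have h1 : IntervalIntegrable (fun t : ℝ => t ^ (p - 1) * Real.exp (-t)) volume 0 a := by
    apply (intervalIntegral.intervalIntegrable_rpow' (by linarith)).mul_continuousOn
    exact (Real.continuous_exp.comp continuous_neg).continuousOn
  have h2 : IntervalIntegrable (fun t : ℝ => t ^ (p - 1) * Real.exp (-t)) volume a b := by
    apply ContinuousOn.intervalIntegrable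
    intro t ht
    rw [Set.uIcc_of_le hab] at ht
    have ht0 : t ≠ 0 := (lt_of_lt_of_le ha ht.1).ne'
    exact ((Real.continuousAt_rpow_const t (p - 1) (Or.inl ht0)).mul
      ((Real.continuous_exp.comp continuous_neg).continuousAt)).continuousWithinAt
  have := intervalIntegral.integral_add_adjacent_intervals h1 h2
  unfold lowerGamma
  linarith

theorem Phi1_lower_bound (ν α₀ η Lm LM Nm NM : ℝ) (L N : ℝ → ℝ)
    (hν : 0 < ν) (hν1 : ν < 1) (hα : 0 < α₀) (hη : α₀ ≤ η)
    (hL : ContinuousOn L (Set.Icc α₀ η)) (hN : ContinuousOn N (Set.Icc α₀ η))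
    (hLm : 0 < Lm) (hNm : 0 < Nm)
    (hLb : ∀ s ∈ Set.Icc α₀ η, Lm ≤ L s ∧ L s ≤ LM)
    (hNb : ∀ s ∈ Set.Icc α₀ η, Nm ≤ N s ∧ N s ≤ NM) :
    (1 / (2 * LM)) * Real.exp ((NM / Lm) * α₀ ^ 2) * (NM / Lm) ^ ((ν - 1) / 2) *
        (lowerGamma ((1 - ν) / 2) (η ^ 2 * (NM / Lm)) -
          lowerGamma ((1 - ν) / 2) (α₀ ^ 2 * (NM / Lm))) ≤
      ∫ s in α₀..η, s ^ (-ν) * (L s)⁻¹ *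
        Real.exp (-2 * ∫ t in α₀..s, t * (N t / L t)) := by
  set c : ℝ := NM / Lm with hc_def
  set p : ℝ := (1 - ν) / 2 with hp_def
  have hmem : α₀ ∈ Set.Icc α₀ η := ⟨le_refl _, hη⟩
  have hNM : 0 < NM := lt_of_lt_of_le hNm (le_trans (hNb α₀ hmem).1 (hNb α₀ hmem).2)
  have hLM : 0 < LM := lt_of_lt_of_le hLm (le_trans (hLb α₀ hmem).1 (hLb α₀ hmem).2)
  have hc : 0 < c := div_pos hNM hLm
  have hp : 0 < p := by rw [hp_def]; linarith
  -- positivity on the interval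
  have hspos : ∀ s ∈ Set.Icc α₀ η, 0 < s := fun s hs => lt_of_lt_of_le hα hs.1
  -- Step 1: lowerGamma difference as interval integral
  have ha2 : 0 < α₀ ^ 2 * c := by positivity
  have hab2 : α₀ ^ 2 * c ≤ η ^ 2 * c := by
    have : α₀ ^ 2 ≤ η ^ 2 := by nlinarith
    nlinarith
  have hγ : lowerGamma p (η ^ 2 * c) - lowerGamma p (α₀ ^ 2 * c)
      = ∫ t in α₀ ^ 2 * c..η ^ 2 * c, t ^ (p - 1) * Real.exp (-t) :=
    lowerGamma_diff hp ha2 hab2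
  -- Step 2: substitution t = s^2 * c
  have hsub : (∫ t in α₀ ^ 2 * c..η ^ 2 * c, t ^ (p - 1) * Real.exp (-t))
      = ∫ s in α₀..η, (2 * s * c) • ((fun t => t ^ (p - 1) * Real.exp (-t)) ∘ (fun s => s ^ 2 * c)) s := by
    rw [intervalIntegral.integral_comp_smul_deriv' (f := fun s => s ^ 2 * c)
      (f' := fun s => 2 * s * c) (g := fun t => t ^ (p - 1) * Real.exp (-t))]
    · intro x _
      have : HasDerivAt (fun s : ℝ => s ^ 2 * c) (2 * x * c) x := by
        simpa [mul_comm] using ((hasDerivAt_pow 2 x).mul_const c)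
      simpa using this
    · exact (continuous_const.mul continuous_id |>.mul continuous_const).continuousOn
    · intro t ht
      obtain ⟨s, hs, rfl⟩ := ht
      rw [Set.uIcc_of_le hη] at hs
      have ht0 : (0:ℝ) < s ^ 2 * c := by have := hspos s hs; positivity
      exact ((Real.continuousAt_rpow_const _ (p - 1) (Or.inl ht0.ne')).mul
        ((Real.continuous_exp.comp continuous_neg).continuousAt)).continuousWithinAt
  -- Step 3: rewrite the substituted integrand
  have hpt : ∀ s ∈ Set.uIcc α₀ η,
      (2 * s * c) • ((fun t => t ^ (p - 1) * Real.exp (-t)) ∘ (fun s : ℝ => s ^ 2 * c)) s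
        = (2 * c ^ p) * (s ^ (-ν) * Real.exp (-(c * s ^ 2))) := by
    intro s hs
    rw [Set.uIcc_of_le hη] at hs
    have hs0 : 0 < s := hspos s hs
    simp only [smul_eq_mul, Function.comp_apply]
    have h1 : (s ^ 2 * c) ^ (p - 1) = s ^ (2 * (p - 1)) * c ^ (p - 1) := by
      rw [Real.mul_rpow (by positivity) hc.le, ← Real.rpow_natCast s 2,
        ← Real.rpow_mul hs0.le]
      norm_num
    rw [h1]
    have h2 : s * s ^ (2 * (p - 1)) = s ^ (-ν) := by
      have e : -ν = 1 + 2 * (p - 1) := by rw [hp_def]; ring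
      rw [e, Real.rpow_add hs0, Real.rpow_one]
    have h3 : c * c ^ (p - 1) = c ^ p := by
      conv_rhs => rw [show p = 1 + (p - 1) by ring]
      rw [Real.rpow_add hc, Real.rpow_one]
    have : 2 * s * c * (s ^ (2 * (p - 1)) * c ^ (p - 1) * Real.exp (-(s ^ 2 * c)))
        = 2 * (c * c ^ (p - 1)) * ((s * s ^ (2 * (p - 1))) * Real.exp (-(s ^ 2 * c))) := by
      ring
    rw [this, h2, h3, mul_comm (s ^ 2) c]
  have hsub2 : (∫ t in α₀ ^ 2 * c..η ^ 2 * c, t ^ (p - 1) * Real.exp (-t))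
      = (2 * c ^ p) * ∫ s in α₀..η, s ^ (-ν) * Real.exp (-(c * s ^ 2)) := by
    rw [hsub, intervalIntegral.integral_congr hpt, intervalIntegral.integral_const_mul]
  -- Step 4: the LHS equals (1/LM) * exp(c α₀²) * I
  set I : ℝ := ∫ s in α₀..η, s ^ (-ν) * Real.exp (-(c * s ^ 2)) with hI_def
  have hcc : c ^ ((ν - 1) / 2) * c ^ p = 1 := by
    rw [← Real.rpow_add hc, hp_def, show (ν - 1) / 2 + (1 - ν) / 2 = 0 by ring, Real.rpow_zero]
  have hLHS : (1 / (2 * LM)) * Real.exp (c * α₀ ^ 2) * c ^ ((ν - 1) / 2) *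
      (lowerGamma p (η ^ 2 * c) - lowerGamma p (α₀ ^ 2 * c))
      = (1 / LM) * Real.exp (c * α₀ ^ 2) * I := by
    rw [hγ, hsub2]
    have : (1 / (2 * LM)) * Real.exp (c * α₀ ^ 2) * c ^ ((ν - 1) / 2) * (2 * c ^ p * I)
        = (c ^ ((ν - 1) / 2) * c ^ p) * ((1 / LM) * Real.exp (c * α₀ ^ 2) * I) := by
      field_simp
    rw [this, hcc, one_mul]
  rw [hLHS]
  -- Step 5: pointwise comparison and integral monotonicity
  have hF : ContinuousOn (fun s => ∫ t in α₀..s, t * (N t / L t)) (Set.Icc α₀ η) := by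
    have : Set.uIcc α₀ η = Set.Icc α₀ η := Set.uIcc_of_le hη
    rw [← this]
    apply intervalIntegral.continuousOn_primitive_interval
    rw [this]
    apply ContinuousOn.integrableOn_compact isCompact_Icc
    exact (continuousOn_id.mul (hN.div hL (fun t ht => (lt_of_lt_of_le hLm (hLb t ht).1).ne')))
  have hcontLower : ContinuousOn
      (fun s => s ^ (-ν) * (1 / LM) * (Real.exp (c * α₀ ^ 2) * Real.exp (-(c * s ^ 2))))
      (Set.Icc α₀ η) := by
    apply ContinuousOn.mul
    · apply ContinuousOn.mul _ continuousOn_const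
      intro s hs
      exact (Real.continuousAt_rpow_const s (-ν) (Or.inl (hspos s hs).ne')).continuousWithinAt
    · exact (continuousOn_const.mul
        ((Real.continuous_exp.comp (continuous_neg.comp
          (continuous_const.mul (continuous_pow 2)))).continuousOn))
  have hcontUpper : ContinuousOn
      (fun s => s ^ (-ν) * (L s)⁻¹ * Real.exp (-2 * ∫ t in α₀..s, t * (N t / L t)))
      (Set.Icc α₀ η) := by
    apply ContinuousOn.mul
    · apply ContinuousOn.mul
      · intro s hs
        exact (Real.continuousAt_rpow_const s (-ν) (Or.inl (hspos s hs).ne')).continuousWithinAt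
      · exact hL.inv₀ (fun s hs => (lt_of_lt_of_le hLm (hLb s hs).1).ne')
    · exact Real.continuous_exp.comp_continuousOn (continuousOn_const.mul hF)
  have hmono : (∫ s in α₀..η, s ^ (-ν) * (1 / LM) * (Real.exp (c * α₀ ^ 2) * Real.exp (-(c * s ^ 2))))
      ≤ ∫ s in α₀..η, s ^ (-ν) * (L s)⁻¹ * Real.exp (-2 * ∫ t in α₀..s, t * (N t / L t)) := by
    apply intervalIntegral.integral_mono_on hη
    · exact (hcontLower.mono (le_of_eq (Set.uIcc_of_le hη))).intervalIntegrable
    · exact (hcontUpper.mono (le_of_eq (Set.uIcc_of_le hη))).intervalIntegrable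
    · intro s hs
      have hs0 : 0 < s := hspos s hs
      -- bound on the inner integral
      have hinner : (∫ t in α₀..s, t * (N t / L t)) ≤ c * (s ^ 2 - α₀ ^ 2) / 2 := by
        have hsubIcc : Set.Icc α₀ s ⊆ Set.Icc α₀ η := Set.Icc_subset_Icc_right hs.2
        have hint1 : IntervalIntegrable (fun t => t * (N t / L t)) volume α₀ s := by
          apply ContinuousOn.intervalIntegrable
          rw [Set.uIcc_of_le hs.1]
          exact ((continuousOn_id.mul ((hN.div hL
            (fun t ht => (lt_of_lt_of_le hLm (hLb t ht).1).ne')))).mono hsubIcc)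
        have hint2 : IntervalIntegrable (fun t : ℝ => t * c) volume α₀ s :=
          (continuous_id.mul continuous_const).intervalIntegrable _ _
        have hle : (∫ t in α₀..s, t * (N t / L t)) ≤ ∫ t in α₀..s, t * c := by
          apply intervalIntegral.integral_mono_on hs.1 hint1 hint2
          intro t ht
          have ht' : t ∈ Set.Icc α₀ η := hsubIcc ht
          have ht0 : 0 ≤ t := (hspos t ht').le
          apply mul_le_mul_of_nonneg_left _ ht0
          exact div_le_div₀ hNM.le (hNb t ht').2 hLm (hLb t ht').1
        have : (∫ t in α₀..s, t * c) = c * (s ^ 2 - α₀ ^ 2) / 2 := by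
          rw [intervalIntegral.integral_mul_const, integral_id]
          ring
        linarith
      have hexp : Real.exp (c * α₀ ^ 2) * Real.exp (-(c * s ^ 2))
          ≤ Real.exp (-2 * ∫ t in α₀..s, t * (N t / L t)) := by
        rw [← Real.exp_add]
        apply Real.exp_le_exp.2
        linarith
      have hLinv : (1 / LM) ≤ (L s)⁻¹ := by
        rw [one_div]
        exact inv_anti₀ (lt_of_lt_of_le hLm (hLb s hs).1) (hLb s hs).2
      have hνpos : (0:ℝ) ≤ s ^ (-ν) := (Real.rpow_pos_of_pos hs0 _).le
      have hexp0 : (0:ℝ) ≤ Real.exp (c * α₀ ^ 2) * Real.exp (-(c * s ^ 2)) := by positivity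
      calc s ^ (-ν) * (1 / LM) * (Real.exp (c * α₀ ^ 2) * Real.exp (-(c * s ^ 2)))
          ≤ s ^ (-ν) * (L s)⁻¹ * (Real.exp (c * α₀ ^ 2) * Real.exp (-(c * s ^ 2))) := by
            apply mul_le_mul_of_nonneg_right _ hexp0
            exact mul_le_mul_of_nonneg_left hLinv hνpos
        _ ≤ s ^ (-ν) * (L s)⁻¹ * Real.exp (-2 * ∫ t in α₀..s, t * (N t / L t)) := by
            apply mul_le_mul_of_nonneg_left hexp
            have : (0:ℝ) < (L s)⁻¹ := inv_pos.2 (lt_of_lt_of_le hLm (hLb s hs).1)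
            positivity
  refine le_trans (le_of_eq ?_) hmono
  rw [hI_def, ← intervalIntegral.integral_const_mul]
  apply intervalIntegral.integral_congr
  intro s _
  simp only [smul_eq_mul]
  ring
end

section
/- Let (X, ‖·‖) be the Banach space C⁰[α₀, β₀] with the sup norm, and let Φ : X × [α₀, β₀] → ℝ be a map such that there exist constants 0 < m ≤ M with m ≤ Φ(u, β₀) ≤ M for all u ∈ X, Φ(u, α₀) = 0, 0 ≤ Φ(u, η) ≤ Φ(u, β₀) for all η, and |Φ(u, η) - Φ(u*, η)| ≤ K‖u - u*‖ for all u, u* ∈ X, η ∈ [α₀, β₀], with Φ(·, η) continuous in η for each u. Define V : X → X by V(u)(η) = 1 - Φ(u, η)/Φ(u, β₀). If 2KM/m² < 1, then V has a unique fixed point in X. -/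
theorem liquid_operator_fixed_point (α₀ β₀ m M K : ℝ) (h : α₀ ≤ β₀)
    (Φ : C(Set.Icc α₀ β₀, ℝ) → Set.Icc α₀ β₀ → ℝ)
    (hm : 0 < m) (hmM : m ≤ M)
    (hΦβ : ∀ u, m ≤ Φ u ⟨β₀, Set.right_mem_Icc.mpr h⟩ ∧
      Φ u ⟨β₀, Set.right_mem_Icc.mpr h⟩ ≤ M)
    (hΦα : ∀ u, Φ u ⟨α₀, Set.left_mem_Icc.mpr h⟩ = 0)
    (hΦmono : ∀ u η, 0 ≤ Φ u η ∧ Φ u η ≤ Φ u ⟨β₀, Set.right_mem_Icc.mpr h⟩)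
    (hΦlip : ∀ u u' η, |Φ u η - Φ u' η| ≤ K * ‖u - u'‖)
    (hΦcont : ∀ u, Continuous (Φ u))
    (hcontr : 2 * K * M / m ^ 2 < 1) :
    ∃! u : C(Set.Icc α₀ β₀, ℝ),
      ∀ η, u η = 1 - Φ u η / Φ u ⟨β₀, Set.right_mem_Icc.mpr h⟩ := by
  set β : Set.Icc α₀ β₀ := ⟨β₀, Set.right_mem_Icc.mpr h⟩ with hβ
  set V : C(Set.Icc α₀ β₀, ℝ) → C(Set.Icc α₀ β₀, ℝ) := fun u =>
    ⟨fun η => 1 - Φ u η / Φ u β, by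
      exact (continuous_const.sub ((hΦcont u).div_const _))⟩ with hV
  set c : ℝ := 2 * K * M / m ^ 2 with hc
  set c' : NNReal := Real.toNNReal c with hc'
  have hm2 : (0:ℝ) < m ^ 2 := by positivity
  -- Lipschitz estimate
  have hlip : LipschitzWith c' V := by
    refine LipschitzWith.of_dist_le_mul fun u u' => ?_
    have hd : (0:ℝ) ≤ (c' : ℝ) * dist u u' := by positivity
    refine (ContinuousMap.dist_le hd).mpr fun η => ?_
    have hN : ‖u - u'‖ = dist u u' := (dist_eq_norm u u').symm
    set N := dist u u' with hNdef
    have hNn : (0:ℝ) ≤ N := dist_nonneg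
    have hKN : (0:ℝ) ≤ K * N := by
      have := hΦlip u u' η
      rw [hN] at this
      exact le_trans (abs_nonneg _) this
    have hb : m ≤ Φ u' β := (hΦβ u').1
    have hd' : m ≤ Φ u β := (hΦβ u).1
    have hbpos : (0:ℝ) < Φ u' β := lt_of_lt_of_le hm hb
    have hdpos : (0:ℝ) < Φ u β := lt_of_lt_of_le hm hd'
    have haM : |Φ u' η| ≤ M := by
      rw [abs_of_nonneg (hΦmono u' η).1]
      exact le_trans (hΦmono u' η).2 (hΦβ u').2
    have hbM : |Φ u' β| ≤ M := by
      rw [abs_of_nonneg (le_of_lt hbpos)]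
      exact (hΦβ u').2
    have h1 : |Φ u β - Φ u' β| ≤ K * N := by
      have := hΦlip u u' β; rw [hN] at this; exact this
    have h2 : |Φ u' η - Φ u η| ≤ K * N := by
      have := hΦlip u' u η
      rw [show ‖u' - u‖ = dist u u' from by rw [dist_eq_norm, norm_sub_rev]] at this
      exact this
    have key : dist ((V u) η) ((V u') η) ≤ c * N := by
      have hVu : (V u) η = 1 - Φ u η / Φ u β := rfl
      have hVu' : (V u') η = 1 - Φ u' η / Φ u' β := rfl
      rw [Real.dist_eq, hVu, hVu']
      have heq : (1 - Φ u η / Φ u β) - (1 - Φ u' η / Φ u' β)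
          = (Φ u' η * (Φ u β - Φ u' β) + Φ u' β * (Φ u' η - Φ u η))
            / (Φ u' β * Φ u β) := by
        field_simp
        ring
      rw [heq, abs_div]
      have hnum : |Φ u' η * (Φ u β - Φ u' β) + Φ u' β * (Φ u' η - Φ u η)|
          ≤ M * (K * N) + M * (K * N) := by
        calc |Φ u' η * (Φ u β - Φ u' β) + Φ u' β * (Φ u' η - Φ u η)|
            ≤ |Φ u' η * (Φ u β - Φ u' β)| + |Φ u' β * (Φ u' η - Φ u η)| := abs_add_le _ _
          _ = |Φ u' η| * |Φ u β - Φ u' β| + |Φ u' β| * |Φ u' η - Φ u η| := by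
              rw [abs_mul, abs_mul]
          _ ≤ M * (K * N) + M * (K * N) := by
              gcongr <;> [exact le_trans (abs_nonneg _) haM;
                exact le_trans (abs_nonneg _) hbM]
      have hden : m ^ 2 ≤ |Φ u' β * Φ u β| := by
        rw [abs_of_nonneg (by positivity)]
        calc m ^ 2 = m * m := sq m
          _ ≤ Φ u' β * Φ u β := mul_le_mul hb hd' hm.le (hm.le.trans hb)
      calc |Φ u' η * (Φ u β - Φ u' β) + Φ u' β * (Φ u' η - Φ u η)| / |Φ u' β * Φ u β|
          ≤ (M * (K * N) + M * (K * N)) / m ^ 2 :=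
            div_le_div₀ (by
              have hM0 : (0:ℝ) ≤ M := hm.le.trans hmM
              exact add_nonneg (mul_nonneg hM0 hKN) (mul_nonneg hM0 hKN)) hnum hm2 hden
        _ = c * N := by rw [hc]; ring
    calc dist ((V u) η) ((V u') η) ≤ c * N := key
      _ ≤ (c' : ℝ) * N := by
          apply mul_le_mul_of_nonneg_right _ hNn
          exact Real.le_coe_toNNReal c
      _ = (c' : ℝ) * dist u u' := rfl
  have hc'1 : c' < 1 := by
    rw [hc', ← Real.toNNReal_one]
    exact (Real.toNNReal_lt_toNNReal_iff one_pos).mpr hcontr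
  have hcw : ContractingWith c' V := ⟨hc'1, hlip⟩
  have hne : Nonempty C(Set.Icc α₀ β₀, ℝ) := ⟨0⟩
  refine ⟨hcw.fixedPoint V, ?_, ?_⟩
  · intro η
    have heq : V (ContractingWith.fixedPoint V hcw) = ContractingWith.fixedPoint V hcw :=
      hcw.fixedPoint_isFixedPt
    conv_lhs => rw [← heq]
    rfl
  · intro u hu
    have : Function.IsFixedPt V u := by
      apply ContinuousMap.ext
      intro η
      exact (hu η).symm
    exact hcw.fixedPoint_unique this
end
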